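/- Under the same hypotheses (|pᵢ − q·αᵢ| ≤ ε for i = 2,…,k−1 with q ≤ 2^{(k−2)(k−1)/4}·ε^{−(k−2)}, d = (a_k−a₁)/q, o = a₁), the square norm satisfies N^{(2)}_{d,o}(A) ≤ 2^{(k−1)/4}·√(k−2), where N^{(2)}_{d,o}(A) = (√(Σ_{i=1}^{k} |aᵢ − o − dℤ|²))/d · ((a_k−a₁)/d)^{1/(k−2)}. -/

import Mathlib

/-!
Take `o = a₁` and `d = (a_k - a₁)/q`, so that `aᵢ - o = q αᵢ d`. The integer `pᵢ` then
witnesses `|aᵢ - o - dℤ| ≤ d |q αᵢ - pᵢ| ≤ d ε` for `1 < i < k`, while the two end points are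
lattice points. Hence the Euclidean norm of the distance vector is at most `√(k-2) d ε`, and
the bound on `q` gives `q^{1/(k-2)} ≤ 2^{(k-1)/4} ε⁻¹`, so the factors of `ε` cancel.
-/

/-- The paper's `|x - dℤ|`. -/
noncomputable def latticeDist (d x : ℝ) : ℝ := ⨅ m : ℤ, |x - m * d|

lemma latticeDist_nonneg (d x : ℝ) : 0 ≤ latticeDist d x :=
  le_ciInf fun _ => abs_nonneg _

lemma latticeDist_le (d x : ℝ) (m : ℤ) : latticeDist d x ≤ |x - m * d| :=
  ciInf_le ⟨0, by rintro _ ⟨n, rfl⟩; exact abs_nonneg _⟩ m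

lemma latticeDist_mul_le (d t : ℝ) (m : ℤ) : latticeDist d (t * d) ≤ |d| * |t - m| := by
  refine (latticeDist_le d _ m).trans_eq ?_
  rw [← sub_mul, abs_mul, mul_comm]

lemma latticeDist_sub_le {a₀ a₁ d x : ℝ} {q : ℕ} (h : 0 < a₁ - a₀) (hq : 0 < q)
    (hd : d = (a₁ - a₀) / q) (m : ℤ) :
    latticeDist d (x - a₀) ≤ d * |q * ((x - a₀) / (a₁ - a₀)) - m| := by
  have hd₀ : 0 < d := by rw [hd]; exact div_pos h (by exact_mod_cast hq)
  have hscale : x - a₀ = q * ((x - a₀) / (a₁ - a₀)) * d := by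
    rw [hd]; field_simp [h.ne']
  simpa only [← hscale, abs_of_pos hd₀] using
    latticeDist_mul_le d (q * ((x - a₀) / (a₁ - a₀))) m

lemma Fin.sum_le_nsmul_of_interior_le {M : Type*} [AddCommMonoid M] [PartialOrder M]
    [IsOrderedAddMonoid M] {n : ℕ} {f : Fin (n + 2) → M} {c : M} (h₀ : f 0 ≤ 0)
    (hlast : f (Fin.last (n + 1)) ≤ 0)
    (hint : ∀ i : Fin (n + 2), 0 < (i : ℕ) → (i : ℕ) < n + 1 → f i ≤ c) :
    ∑ i, f i ≤ n • c := by
  rw [Fin.sum_univ_succ, Fin.sum_univ_castSucc]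
  have hmid : ∑ i : Fin n, f i.castSucc.succ ≤ n • c := by
    simpa using Finset.sum_le_card_nsmul Finset.univ _ c fun (i : Fin n) _ =>
      hint i.castSucc.succ (Nat.succ_pos _) (by simp)
  calc f 0 + (∑ i : Fin n, f i.castSucc.succ + f (Fin.last n).succ)
      ≤ 0 + (n • c + 0) := add_le_add h₀ (add_le_add hmid hlast)
    _ = n • c := by simp

lemma sum_latticeDist_sq_le {n : ℕ} {a : Fin (n + 2) → ℝ} (p : Fin (n + 2) → ℤ) {q : ℕ}
    {d ε : ℝ} (ha : 0 < a (Fin.last (n + 1)) - a 0) (hq : 0 < q)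
    (happ : ∀ i : Fin (n + 2), 0 < (i : ℕ) → (i : ℕ) < n + 1 →
      |(p i : ℝ) - q * ((a i - a 0) / (a (Fin.last (n + 1)) - a 0))| ≤ ε)
    (hd : d = (a (Fin.last (n + 1)) - a 0) / q) :
    ∑ i, latticeDist d (a i - a 0) ^ 2 ≤ n * (d * ε) ^ 2 := by
  have hd₀ : 0 < d := by rw [hd]; exact div_pos ha (by exact_mod_cast hq)
  have hdist i (m : ℤ) := latticeDist_sub_le (x := a i) ha hq hd m
  rw [← nsmul_eq_mul]
  refine Fin.sum_le_nsmul_of_interior_le ?_ ?_ fun i h₀ hlt => ?_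
  · simpa using pow_le_pow_left₀ (latticeDist_nonneg _ _) (hdist 0 0) 2
  · simpa [ha.ne'] using
      pow_le_pow_left₀ (latticeDist_nonneg _ _) (hdist (Fin.last _) q) 2
  · refine pow_le_pow_left₀ (latticeDist_nonneg _ _) ((hdist i (p i)).trans ?_) 2
    rw [abs_sub_comm]
    exact mul_le_mul_of_nonneg_left (happ i h₀ hlt) hd₀.le

lemma rpow_one_div_le_of_le_rpow_mul_rpow_neg {x b t s ε : ℝ} (hx : 0 ≤ x) (hb : 0 ≤ b)
    (hs : 0 < s) (hε : 0 < ε) (h : x ≤ b ^ (s * t) * ε ^ (-s)) :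
    x ^ (1 / s) ≤ b ^ t * ε⁻¹ := by
  rw [one_div, Real.rpow_inv_le_iff_of_pos hx (by positivity) hs,
    Real.mul_rpow (by positivity) (by positivity), ← Real.rpow_mul hb, mul_comm t,
    Real.inv_rpow hε.le, ← Real.rpow_neg hε.le]
  exact h

/-- Theorem 2.2 (square norm): under the same hypotheses,
`N⁽²⁾_{d,o}(A) ≤ 2^{(k-1)/4} √(k-2)`. -/
theorem lll_square_norm_bound (k : ℕ) (hk : 3 ≤ k) (a : Fin k → ℝ) (hmono : StrictMono a)
    (p : Fin k → ℤ) (q : ℕ) (hq : 1 ≤ q) (ε : ℝ) (hε0 : 0 < ε)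
    (happ : ∀ i : Fin k, 0 < (i : ℕ) → (i : ℕ) < k - 1 →
      |(p i : ℝ) - (q : ℝ) *
        ((a i - a ⟨0, by omega⟩) / (a ⟨k - 1, by omega⟩ - a ⟨0, by omega⟩))| ≤ ε)
    (hqb : (q : ℝ) ≤ 2 ^ (((k : ℝ) - 2) * ((k : ℝ) - 1) / 4) * ε ^ (-((k : ℝ) - 2)))
    (d o : ℝ) (hd : d = (a ⟨k - 1, by omega⟩ - a ⟨0, by omega⟩) / (q : ℝ))
    (ho : o = a ⟨0, by omega⟩) :
    Real.sqrt (∑ i, (⨅ m : ℤ, |a i - o - (m : ℝ) * d|) ^ 2) / d *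
      ((a ⟨k - 1, by omega⟩ - a ⟨0, by omega⟩) / d) ^ ((1 : ℝ) / ((k : ℝ) - 2))
      ≤ 2 ^ (((k : ℝ) - 1) / 4) * Real.sqrt ((k : ℝ) - 2) := by
  obtain ⟨n, rfl⟩ : ∃ n, k = n + 2 := ⟨k - 2, by omega⟩
  have hn : ((n + 2 : ℕ) : ℝ) - 2 = n := by push_cast; ring
  have hn0 : (0 : ℝ) < n := by norm_cast; omega
  have hn1 : ((n + 2 : ℕ) : ℝ) - 1 = n + 1 := by push_cast; ring
  have hzero : (⟨0, by omega⟩ : Fin (n + 2)) = 0 := rfl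
  have hlast : (⟨n + 1, by omega⟩ : Fin (n + 2)) = Fin.last (n + 1) := rfl
  simp only [hn, hn1, hzero, hlast, Nat.add_succ_sub_one] at happ hqb hd ho ⊢
  subst ho
  set Δ := a (Fin.last (n + 1)) - a 0
  have hΔ : 0 < Δ := sub_pos.mpr (hmono Fin.last_pos)
  have hqpos : (0 : ℝ) < q := by exact_mod_cast hq
  have hdpos : 0 < d := by rw [hd]; positivity
  have hratio : Δ / d = q := by rw [hd]; field_simp
  have hsum := sum_latticeDist_sq_le p hΔ hq happ hd
  have hroot : (q : ℝ) ^ (1 / (n : ℝ)) ≤ 2 ^ (((n : ℝ) + 1) / 4) * ε⁻¹ :=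
    rpow_one_div_le_of_le_rpow_mul_rpow_neg hqpos.le zero_le_two hn0 hε0
      (by rwa [mul_div_assoc] at hqb)
  calc √(∑ i, latticeDist d (a i - a 0) ^ 2) / d * (Δ / d) ^ (1 / (n : ℝ))
      ≤ √(n * (d * ε) ^ 2) / d * (2 ^ (((n : ℝ) + 1) / 4) * ε⁻¹) := by
        rw [hratio]; gcongr
    _ = 2 ^ (((n : ℝ) + 1) / 4) * √n := by
        rw [Real.sqrt_mul hn0.le, Real.sqrt_sq (by positivity)]
        field_simp
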